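/- arXiv:1903.01068 — 4 statements merged into one kernel-verified Lean document; each statement's English description precedes it below -/
import Mathlib

section
/- (Jamison) Let (X, 𝒞) be a convexity space with Radon number at most r₂ ≥ 3, and let k > 2 be an integer. Then every multiset Y of elements of X of cardinality r₂^{⌈log₂ k⌉} (counting multiplicities) can be partitioned into k nonempty parts Y₁, …, Y_k such that conv(Y₁) ∩ conv(Y₂) ∩ ⋯ ∩ conv(Y_k) ≠ ∅; in other words, the kth partition number satisfies r_k ≤ r₂^{⌈log₂ k⌉}. -/
open scoped Classical

/-- A convexity space on a ground set `X`: a finite family of "convex" subsets of `X`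
containing `∅` and `X` and closed under pairwise intersections. -/
structure ConvexitySpace (X : Type*) where
  sets : Finset (Set X)
  empty_mem : ∅ ∈ sets
  univ_mem : Set.univ ∈ sets
  inter_mem : ∀ A ∈ sets, ∀ B ∈ sets, A ∩ B ∈ sets

namespace ConvexitySpace

variable {X : Type*}

/-- The convex hull of `Y`: the intersection of all convex sets containing `Y`. -/
def hull (CS : ConvexitySpace X) (Y : Set X) : Set X :=
  ⋂₀ {S : Set X | S ∈ CS.sets ∧ Y ⊆ S}

/-- The convexity space has Radon number at most `r`: every set of at least `r` points
can be partitioned into two parts whose convex hulls intersect. -/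
def RadonLE (CS : ConvexitySpace X) (r : ℕ) : Prop :=
  ∀ P : Finset X, r ≤ P.card →
    ∃ P₁ P₂ : Finset X, P₁ ∪ P₂ = P ∧ Disjoint P₁ P₂ ∧
      (CS.hull ↑P₁ ∩ CS.hull ↑P₂).Nonempty

end ConvexitySpace

namespace Jamison

open ConvexitySpace

variable {X : Type*} (CS : ConvexitySpace X)

lemma subset_hull (Y : Set X) : Y ⊆ CS.hull Y := by
  intro x hx S hS
  exact hS.2 hx

lemma hull_min {Y T : Set X} (hT : T ∈ CS.sets) (h : Y ⊆ T) : CS.hull Y ⊆ T :=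
  Set.sInter_subset_of_mem ⟨hT, h⟩

lemma hull_mono {A B : Set X} (h : A ⊆ B) : CS.hull A ⊆ CS.hull B := by
  intro x hx S hS
  exact hx S ⟨hS.1, h.trans hS.2⟩

lemma hull_empty : CS.hull (∅ : Set X) = ∅ :=
  Set.subset_empty_iff.mp (hull_min CS CS.empty_mem (by simp))

lemma hull_subset_of_subset_hull {A B : Set X} (h : A ⊆ CS.hull B) :
    CS.hull A ⊆ CS.hull B := by
  intro x hx S hS
  exact hx S ⟨hS.1, fun a ha => h ha S hS⟩

/-- Radon partition of an indexed family of `r₂` points. -/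
lemma radon_index {r₂ : ℕ} (hr : 2 ≤ r₂) (hCS : CS.RadonLE r₂) (c : Fin r₂ → X) :
    ∃ (I : Fin 2 → Finset (Fin r₂)) (z : X),
      Disjoint (I 0) (I 1) ∧ I 0 ∪ I 1 = Finset.univ ∧
      ∀ j, z ∈ CS.hull (c '' ↑(I j)) := by
  by_cases hinj : Function.Injective c
  · set P : Finset X := Finset.univ.image c with hP
    have hcard : r₂ ≤ P.card := by
      rw [hP, Finset.card_image_of_injective _ hinj, Finset.card_univ, Fintype.card_fin]
    obtain ⟨P₁, P₂, hunion, hdisj, z, hz₁, hz₂⟩ := hCS P hcard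
    refine ⟨![Finset.univ.filter (fun i => c i ∈ P₁),
              Finset.univ.filter (fun i => c i ∈ P₂)], z, ?_, ?_, ?_⟩
    · simp only [Matrix.cons_val_zero, Matrix.cons_val_one, Matrix.head_cons]
      rw [Finset.disjoint_left]
      intro i hi₁ hi₂
      simp only [Finset.mem_filter] at hi₁ hi₂
      exact Finset.disjoint_left.mp hdisj hi₁.2 hi₂.2
    · simp only [Matrix.cons_val_zero, Matrix.cons_val_one, Matrix.head_cons]
      ext i
      simp only [Finset.mem_union, Finset.mem_filter, Finset.mem_univ, true_and,
        iff_true]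
      have : c i ∈ P₁ ∪ P₂ := by
        rw [hunion, hP]; exact Finset.mem_image_of_mem c (Finset.mem_univ i)
      simpa using this
    · have key : ∀ (Q : Finset X), Q ⊆ P →
          (c '' ↑(Finset.univ.filter (fun i => c i ∈ Q)) : Set X) = ↑Q := by
        intro Q hQ
        ext x
        constructor
        · rintro ⟨i, hi, rfl⟩
          simp only [Finset.coe_filter, Set.mem_setOf_eq] at hi
          exact hi.2
        · intro hx
          have hx' : x ∈ P := hQ hx
          rw [hP] at hx'
          obtain ⟨i, _, rfl⟩ := Finset.mem_image.mp hx'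
          exact ⟨i, by simpa using hx, rfl⟩
      have h₁ : P₁ ⊆ P := hunion ▸ Finset.subset_union_left
      have h₂ : P₂ ⊆ P := hunion ▸ Finset.subset_union_right
      intro j
      fin_cases j
      · show z ∈ CS.hull (c '' ↑(Finset.univ.filter (fun i => c i ∈ P₁)))
        rw [key P₁ h₁]; exact hz₁
      · show z ∈ CS.hull (c '' ↑(Finset.univ.filter (fun i => c i ∈ P₂)))
        rw [key P₂ h₂]; exact hz₂
  · simp only [Function.Injective, not_forall] at hinj
    obtain ⟨i, j, hcij, hij⟩ := hinj
    refine ⟨![{i}, Finset.univ \ {i}], c i, ?_, ?_, ?_⟩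
    · simp
    · simp
    · intro a
      fin_cases a
      · exact subset_hull CS _ (by simp)
      · refine subset_hull CS _ ?_
        refine ⟨j, ?_, hcij.symm⟩
        show j ∈ (↑(Finset.univ \ {i}) : Set (Fin r₂))
        simp only [Finset.coe_sdiff, Set.mem_diff, Finset.coe_univ, Set.mem_univ,
          Finset.coe_singleton, Set.mem_singleton_iff, true_and]
        intro h; exact hij h.symm

/-- Split a multiset of cardinality `n * d` into `n` blocks of cardinality `d`. -/
lemma multiset_split {n d : ℕ} : ∀ (Y : Multiset X), Multiset.card Y = n * d →
    ∃ B : Fin n → Multiset X, (∑ i, B i) = Y ∧ ∀ i, Multiset.card (B i) = d := by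
  induction n with
  | zero =>
    intro Y hY
    refine ⟨fun i => i.elim0, ?_, fun i => i.elim0⟩
    simp only [Nat.zero_mul, Multiset.card_eq_zero] at hY
    simp [hY]
  | succ n ih =>
    intro Y hY
    set l := Y.toList with hl
    have hYl : (l : Multiset X) = Y := Y.coe_toList
    have hlen : l.length = (n + 1) * d := by
      rw [← hY, ← hYl]; simp
    have hdle : d ≤ l.length := by rw [hlen]; nlinarith
    obtain ⟨B, hBsum, hBcard⟩ := ih ((l.drop d : List X) : Multiset X)
      (by simp [hlen]; ring_nf; omega)
    refine ⟨Fin.cons ((l.take d : List X) : Multiset X) B, ?_, ?_⟩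
    · rw [Fin.sum_cons, hBsum, ← hYl]
      rw [show ((l.take d : List X) : Multiset X) + ((l.drop d : List X) : Multiset X)
        = ((l.take d ++ l.drop d : List X) : Multiset X) from (Multiset.coe_add _ _).symm]
      rw [List.take_append_drop]
    · intro i
      refine Fin.cases ?_ ?_ i
      · simp [hdle]
      · intro i; simp [hBcard i]

/-- Push a good partition forward along a surjection, merging parts. -/
lemma goodpart_map {ι κ : Type*} [Fintype ι] [Fintype κ] [DecidableEq κ]
    (f : ι → Multiset X) (z : X)
    (hne : ∀ i, f i ≠ 0) (hz : ∀ i, z ∈ CS.hull {x | x ∈ f i})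
    (g : ι → κ) (hg : Function.Surjective g) :
    ∃ f' : κ → Multiset X, (∀ j, f' j ≠ 0) ∧ (∑ j, f' j) = ∑ i, f i ∧
      ∀ j, z ∈ CS.hull {x | x ∈ f' j} := by
  refine ⟨fun j => ∑ i ∈ Finset.univ.filter (fun i => g i = j), f i, ?_, ?_, ?_⟩
  · intro j hj0
    obtain ⟨i, rfl⟩ := hg j
    have hi : i ∈ Finset.univ.filter (fun i' => g i' = g i) := by simp
    exact hne i (Finset.sum_eq_zero_iff.mp hj0 i hi)
  · exact Finset.sum_fiberwise _ _ _
  · intro j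
    obtain ⟨i, rfl⟩ := hg j
    have hi : i ∈ Finset.univ.filter (fun i' => g i' = g i) := by simp
    have hsub : {x | x ∈ f i} ⊆ {x | x ∈ ∑ i' ∈ Finset.univ.filter (fun i' => g i' = g i), f i'} := by
      intro x hx
      exact Multiset.mem_of_le (Finset.single_le_sum (fun _ _ => Multiset.zero_le _) hi) hx
    exact hull_mono CS hsub (hz i)

end Jamison

namespace Jamison

variable {X : Type*} (CS : ConvexitySpace X)

lemma main_induction {r₂ : ℕ} (hr : 3 ≤ r₂) (hCS : CS.RadonLE r₂) :
    ∀ m : ℕ, ∀ Y : Multiset X, Multiset.card Y = r₂ ^ m →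
    ∃ (f : Fin (2 ^ m) → Multiset X) (z : X),
      (∀ i, f i ≠ 0) ∧ (∑ i, f i) = Y ∧ ∀ i, z ∈ CS.hull {x | x ∈ f i} := by
  intro m
  induction m with
  | zero =>
    intro Y hY
    simp only [pow_zero, Multiset.card_eq_one] at hY
    obtain ⟨x, rfl⟩ := hY
    refine ⟨fun _ => {x}, x, fun i => by simp, by simp, fun i => ?_⟩
    exact subset_hull CS _ (by simp)
  | succ m ih =>
    intro Y hY
    have hY' : Multiset.card Y = r₂ * r₂ ^ m := by rw [hY, pow_succ]; ring
    obtain ⟨B, hBsum, hBcard⟩ := multiset_split Y hY'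
    -- apply IH to each block
    choose fc c hfne hfsum hc using fun i => ih (B i) (hBcard i)
    -- Radon partition of the centers
    obtain ⟨I, z, hIdisj, hIunion, hzI⟩ := radon_index CS (by omega) hCS c
    have hInonempty : ∀ j, (I j).Nonempty := by
      intro j
      rcases (I j).eq_empty_or_nonempty with h | h
      · exfalso
        have := hzI j
        rw [h] at this
        simp only [Finset.coe_empty, Set.image_empty] at this
        rw [hull_empty] at this
        exact this
      · exact h
    -- the combined partition, indexed by Fin 2 × Fin (2 ^ m)
    set F : Fin 2 × Fin (2 ^ m) → Multiset X :=
      fun p => ∑ i ∈ I p.1, fc i p.2 with hF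
    have hFne : ∀ p, F p ≠ 0 := by
      intro p hp0
      obtain ⟨i, hi⟩ := hInonempty p.1
      exact hfne i p.2 (Finset.sum_eq_zero_iff.mp hp0 i hi)
    have hFsum : (∑ p, F p) = Y := by
      rw [Fintype.sum_prod_type]
      have : ∀ j : Fin 2, (∑ a : Fin (2 ^ m), F (j, a)) = ∑ i ∈ I j, B i := by
        intro j
        simp only [hF]
        rw [Finset.sum_comm]
        exact Finset.sum_congr rfl fun i _ => hfsum i
      rw [Fin.sum_univ_two, this 0, this 1, ← Finset.sum_union hIdisj, hIunion]
      exact hBsum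
    have hFz : ∀ p, z ∈ CS.hull {x | x ∈ F p} := by
      intro p
      have hsub : (c '' ↑(I p.1) : Set X) ⊆ CS.hull {x | x ∈ F p} := by
        rintro _ ⟨i, hi, rfl⟩
        refine hull_mono CS ?_ (hc i p.2)
        intro x hx
        exact Multiset.mem_of_le
          (Finset.single_le_sum (fun _ _ => Multiset.zero_le _) hi) hx
      exact hull_subset_of_subset_hull CS hsub (hzI p.1)
    -- transport along an equivalence to `Fin (2 ^ (m + 1))`
    have hcard : Fintype.card (Fin 2 × Fin (2 ^ m)) = 2 ^ (m + 1) := by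
      simp [pow_succ]; ring
    let e : Fin 2 × Fin (2 ^ m) ≃ Fin (2 ^ (m + 1)) :=
      Fintype.equivFinOfCardEq hcard
    obtain ⟨f', h1, h2, h3⟩ := goodpart_map CS F z hFne hFz e e.surjective
    exact ⟨f', z, h1, h2.trans hFsum, h3⟩

end Jamison

/-- **Jamison's bound on partition numbers** (Lemma 1).
If a convexity space has Radon number at most `r₂ ≥ 3` and `k > 2`, then every multiset `Y`
of points of cardinality `r₂ ^ ⌈log₂ k⌉` (counting multiplicities) can be partitioned into
`k` nonempty parts whose convex hulls have a common point; i.e. `r_k ≤ r₂ ^ ⌈log₂ k⌉`. -/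
theorem jamison_partition_number {X : Type*} (hX : Nonempty X)
    (CS : ConvexitySpace X) (r₂ : ℕ) (hr : 3 ≤ r₂) (hCS : CS.RadonLE r₂)
    (k : ℕ) (hk : 2 < k)
    (Y : Multiset X) (hY : Multiset.card Y = r₂ ^ Nat.clog 2 k) :
    ∃ f : Fin k → Multiset X,
      (∀ i, f i ≠ 0) ∧ (∑ i, f i) = Y ∧
      (⋂ i, CS.hull {x | x ∈ f i}).Nonempty := by
  obtain ⟨f, z, hne, hsum, hz⟩ :=
    Jamison.main_induction CS hr hCS (Nat.clog 2 k) Y hY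
  have hk2 : k ≤ 2 ^ Nat.clog 2 k := Nat.le_pow_clog (by norm_num) k
  have hk0 : 0 < k := by omega
  let g : Fin (2 ^ Nat.clog 2 k) → Fin k := fun j => ⟨min j (k - 1), by omega⟩
  have hg : Function.Surjective g := by
    intro i
    refine ⟨⟨i, lt_of_lt_of_le i.2 hk2⟩, ?_⟩
    ext
    simp only [g]
    omega
  obtain ⟨f', h1, h2, h3⟩ := Jamison.goodpart_map CS f z hne hz g hg
  exact ⟨f', h1, h2.trans hsum, ⟨z, Set.mem_iInter.mpr h3⟩⟩
end

section
/- (Levi) Let (X, 𝒞) be a convexity space with Radon number at most r₂. Then the Helly number of (X, 𝒞) is strictly less than r₂: for every finite family F of convex sets of 𝒞 with ⋂_{S∈F} S = ∅, there is a subfamily G ⊆ F with |G| ≤ r₂ − 1 and ⋂_{S∈G} S = ∅. Equivalently, if every subfamily of F of at most r₂ − 1 sets has nonempty intersection, then ⋂_{S∈F} S ≠ ∅. -/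
open scoped Classical

namespace ConvexitySpace

variable {X : Type*}

theorem hull_subset (CS : ConvexitySpace X) {Y S : Set X}
    (hS : S ∈ CS.sets) (hYS : Y ⊆ S) : CS.hull Y ⊆ S :=
  Set.sInter_subset_of_mem ⟨hS, hYS⟩

end ConvexitySpace

/-- **Levi's theorem** (Lemma 2): the Helly number of a convexity space is strictly less
than its Radon number. If `F` is a finite family of convex sets in a convexity space with
Radon number at most `r₂` and `⋂ F = ∅`, then some subfamily `G ⊆ F` with `|G| ≤ r₂ - 1`
already satisfies `⋂ G = ∅`. -/
theorem levi_helly_lt_radon {X : Type*} (hX : Nonempty X)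
    (CS : ConvexitySpace X) (r₂ : ℕ) (hCS : CS.RadonLE r₂)
    (F : Finset (Set X)) (hF : ∀ S ∈ F, S ∈ CS.sets)
    (hempty : ⋂₀ (F : Set (Set X)) = ∅) :
    ∃ G ⊆ F, G.card ≤ r₂ - 1 ∧ ⋂₀ (G : Set (Set X)) = ∅ := by
  -- take a subfamily of F with empty intersection and minimal cardinality
  classical
  obtain ⟨F', hF'bad, hmin⟩ := Finset.exists_min_image
    (F.powerset.filter (fun G : Finset (Set X) => ⋂₀ (↑G : Set (Set X)) = ∅))
    (fun G => G.card) ⟨F, by simp [hempty]⟩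
  simp only [Finset.mem_filter, Finset.mem_powerset] at hF'bad
  obtain ⟨hF'F, hF'empty⟩ := hF'bad
  refine ⟨F', hF'F, ?_, hF'empty⟩
  -- it suffices to show F'.card ≤ r₂ - 1; suppose not
  by_contra hcard
  push_neg at hcard
  have hr₂ : r₂ ≤ F'.card := by omega
  -- F' is nonempty (else its intersection is univ)
  -- for each S ∈ F', the intersection of F' \ {S} is nonempty by minimality
  have hx : ∀ S ∈ F', ∃ x, x ∈ ⋂₀ ((F'.erase S : Finset (Set X)) : Set (Set X)) := by
    intro S hS
    by_contra h
    push_neg at h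
    have hememp : ⋂₀ ((F'.erase S : Finset (Set X)) : Set (Set X)) = ∅ :=
      Set.eq_empty_iff_forall_notMem.mpr h
    have := hmin (F'.erase S) (by
      simp only [Finset.mem_filter, Finset.mem_powerset]
      exact ⟨(F'.erase_subset S).trans hF'F, hememp⟩)
    have := Finset.card_erase_lt_of_mem hS
    omega
  choose! x hxmem using hx
  -- each x S lies in every T ∈ F' with T ≠ S
  have hxT : ∀ S ∈ F', ∀ T ∈ F', T ≠ S → x S ∈ T := by
    intro S hS T hT hTS
    exact hxmem S hS T (by simp [Finset.mem_erase, hTS, hT])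
  -- x is injective on F'
  have hinj : Set.InjOn x F' := by
    intro S hS T hT hST
    by_contra hne
    have hmem : x S ∈ ⋂₀ (F' : Set (Set X)) := by
      intro U hU
      rcases eq_or_ne U S with rfl | hUS
      · rw [hST]; exact hxT T hT U hU hne
      · exact hxT S hS U hU hUS
    rw [hF'empty] at hmem
    exact hmem
  -- apply Radon to the image
  set P : Finset X := F'.image x with hP
  have hPcard : P.card = F'.card := Finset.card_image_of_injOn hinj
  obtain ⟨P₁, P₂, hunion, hdisj, z, hz₁, hz₂⟩ := hCS P (by omega)
  -- z belongs to every S ∈ F'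
  have hzF' : z ∈ ⋂₀ (F' : Set (Set X)) := by
    intro S hS
    have key : ∀ Q : Finset X, Q ⊆ P → x S ∉ Q → (↑Q : Set X) ⊆ S := by
      intro Q hQP hxSQ p hp
      obtain ⟨T, hT, rfl⟩ := Finset.mem_image.mp (hQP hp)
      rcases eq_or_ne T S with rfl | hTS
      · exact absurd hp hxSQ
      · exact hxT T hT S hS (Ne.symm hTS)
    by_cases hxP₂ : x S ∈ P₂
    · have hxP₁ : x S ∉ P₁ := fun h => (Finset.disjoint_left.mp hdisj h) hxP₂
      exact CS.hull_subset (hF S (hF'F hS))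
        (key P₁ (hunion ▸ Finset.subset_union_left) hxP₁) hz₁
    · exact CS.hull_subset (hF S (hF'F hS))
        (key P₂ (hunion ▸ Finset.subset_union_right) hxP₂) hz₂
  rw [hF'empty] at hzF'
  exact hzF'
end

section
/- (Colorful Helly for convexity spaces) Let r ≥ 3 be an integer, set k = r − 1, n = k^{⌈log₂ r⌉}, and m = S(n, k), the Stirling number of the second kind counting partitions of an n-element set into k nonempty parts. Let (X, 𝒞) be a convexity space with Radon number at most r, and let F₁, …, F_m be finite families of convex sets of 𝒞 such that S₁ ∩ S₂ ∩ ⋯ ∩ S_m ≠ ∅ for every choice of S_i ∈ F_i (i = 1, …, m). Then there exists an index i ∈ {1, …, m} such that ⋂_{S ∈ F_i} S ≠ ∅. -/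
open scoped Classical

/-- Stirling numbers of the second kind: `stirling2 n k` is the number of partitions of an
`n`-element set into `k` nonempty unlabeled parts. -/
def stirling2 : ℕ → ℕ → ℕ
  | 0, 0 => 1
  | 0, _ + 1 => 0
  | _ + 1, 0 => 0
  | n + 1, k + 1 => (k + 1) * stirling2 n (k + 1) + stirling2 n k

/-!
By Levi's lemma, Radon number at most `k + 1` forces Helly number at most `k`, so if no `F i` had
a common point, each `F i` would contain sets `K i 0, …, K i (k - 1)` without a common point.

Iterating Radon partitions along a `(k + 1)`-ary tree of points gives an adaptive Tverberg scheme: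
a history (one of the `2 ^ k - 1` Radon splits at each internal node) determines `k` disjoint
classes of leaves, and for every placement of points at the leaves some history has classes whose
hulls share a point. For a suitable tree there are at most `S(n, k)` histories, so they can be
coloured injectively by `Fin m`. Put at each leaf a point of the colourful intersection
`⋂ i, K i (class of the leaf under the history of colour i)`; the history chosen by the scheme for
this placement, of colour `i`, gives a point in every `K i l`.
-/

theorem stirling2_eq_stirlingSecond : stirling2 = Nat.stirlingSecond := by
  funext n k
  induction n generalizing k with
  | zero => cases k <;> rfl
  | succ n ih =>
    cases k with
    | zero => rfl
    | succ k => simp only [stirling2, Nat.stirlingSecond_succ_succ, ih]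

theorem pow_sub_le_stirling2 {n k : ℕ} (hkn : k ≤ n) : k ^ (n - k) ≤ stirling2 n k := by
  rw [stirling2_eq_stirlingSecond]
  induction n, hkn using Nat.le_induction with
  | base => simp [Nat.stirlingSecond_self]
  | succ n hkn ih =>
    calc k ^ (n + 1 - k) = k * k ^ (n - k) := by rw [Nat.sub_add_comm hkn, pow_succ']
      _ ≤ k * Nat.stirlingSecond n k := by gcongr
      _ ≤ Nat.stirlingSecond (n + 1) k := by
        rcases Nat.eq_zero_or_pos k with rfl | hk
        · simp
        · rw [Nat.stirlingSecond_succ_left n k hk.ne']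
          exact Nat.le_add_right _ _

theorem card_finset_nonempty (α : Type*) [Fintype α] :
    Fintype.card {σ : Finset α // σ.Nonempty} = 2 ^ Fintype.card α - 1 := by
  rw [Fintype.card_subtype, ← Fintype.card_finset, ← Finset.card_univ,
    ← Finset.card_erase_of_mem (Finset.mem_univ ∅)]
  congr 1
  ext σ
  simp [Finset.nonempty_iff_ne_empty]

theorem add_one_pow_succ_le {k c : ℕ} (hck : 2 * (c + 1) ≤ k) :
    (k + 1) ^ (c + 1) ≤ k ^ (c + 1) + 2 * (c + 1) * k ^ c := by
  induction c with
  | zero => simp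
  | succ c ih =>
    have hkc : 2 * (c + 1) * k ^ c ≤ k ^ (c + 1) := by
      rw [pow_succ']
      exact Nat.mul_le_mul_right _ (by omega)
    calc (k + 1) ^ (c + 2) = (k + 1) ^ (c + 1) * (k + 1) := pow_succ _ _
      _ ≤ (k ^ (c + 1) + 2 * (c + 1) * k ^ c) * (k + 1) := by gcongr; exact ih (by omega)
      _ = k ^ (c + 2) + 2 * (c + 1) * k ^ (c + 1) + (k ^ (c + 1) + 2 * (c + 1) * k ^ c) := by ring
      _ ≤ k ^ (c + 2) + 2 * (c + 2) * k ^ (c + 1) := by linarith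

theorem add_one_pow_add_two_mul_le {k c : ℕ} (hc : 3 ≤ c) (hk : 2 ^ (c - 1) < k) :
    (k + 1) ^ c + 2 * k ≤ 2 * k ^ c + 1 := by
  obtain rfl | hc4 := hc.eq_or_lt
  · norm_num at hk
    nlinarith [Nat.mul_le_mul_right (k * k) hk]
  obtain ⟨e, rfl⟩ : ∃ e, c = e + 4 := ⟨c - 4, by omega⟩
  have he : 2 * (e + 4) + 1 ≤ k := by
    have : e < 2 ^ e := Nat.lt_two_pow_self
    rw [show e + 4 - 1 = e + 3 by omega, pow_add] at hk
    norm_num at hk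
    omega
  have hbin := add_one_pow_succ_le (k := k) (c := e + 3) (by omega)
  have hk₁ : (2 * (e + 4) + 1) * k ^ (e + 3) ≤ k ^ (e + 4) := by
    rw [pow_succ' k (e + 3)]
    exact Nat.mul_le_mul_right _ (by omega)
  have hk₂ : 2 * k ≤ k ^ (e + 3) :=
    calc 2 * k ≤ k ^ 2 := by nlinarith
      _ ≤ k ^ (e + 3) := Nat.pow_le_pow_right (by omega) (by omega)
  linarith

theorem add_one_pow_clog_add_two_mul_le {k : ℕ} (hk : 4 ≤ k) :
    (k + 1) ^ Nat.clog 2 k + 2 * k ≤ 2 * k ^ Nat.clog 2 (k + 1) + 1 := by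
  obtain ⟨c, hc⟩ : ∃ c, Nat.clog 2 k = c := ⟨_, rfl⟩
  have hkc : k ≤ 2 ^ c := hc ▸ Nat.le_pow_clog one_lt_two k
  have hck : 2 ^ (c - 1) < k := by
    simpa [hc] using Nat.pow_pred_clog_lt_self one_lt_two (x := k) (by omega)
  rw [hc]
  rcases hkc.lt_or_eq with hlt | heq
  · have hd : Nat.clog 2 (k + 1) = c :=
      le_antisymm ((Nat.clog_le_iff_le_pow one_lt_two).2 hlt) (hc ▸ Nat.clog_mono_right 2 k.le_succ)
    have hc3 : 3 ≤ c := by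
      by_contra! h
      have : 2 ^ c ≤ 2 ^ 2 := Nat.pow_le_pow_right two_pos (by omega)
      omega
    rw [hd]
    exact add_one_pow_add_two_mul_le hc3 hck
  · have hc1 : 1 ≤ c := Nat.pos_of_ne_zero (by rintro rfl; omega)
    have hd : Nat.clog 2 (k + 1) = c + 1 :=
      le_antisymm ((Nat.clog_le_iff_le_pow one_lt_two).2 (by rw [pow_succ]; omega))
        ((Nat.lt_clog_iff_pow_lt one_lt_two).2 (by omega))
    rw [hd]
    have h₁ : (k + 1) ^ c ≤ k ^ (c + 1) :=
      calc (k + 1) ^ c ≤ (2 * k) ^ c := Nat.pow_le_pow_left (by omega) c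
        _ = k ^ (c + 1) := by rw [mul_pow, ← heq, pow_succ']
    have h₂ : 2 * k ≤ k ^ (c + 1) :=
      calc 2 * k ≤ k ^ 2 := by nlinarith
        _ ≤ k ^ (c + 1) := Nat.pow_le_pow_right (by omega) (by omega)
    omega

theorem two_pow_le_stirling2 {k : ℕ} (hk : 4 ≤ k) :
    2 ^ ((k + 1) ^ Nat.clog 2 k - 1) ≤ stirling2 (k ^ Nat.clog 2 (k + 1)) k := by
  have h := add_one_pow_clog_add_two_mul_le hk
  have h₁ : 1 ≤ (k + 1) ^ Nat.clog 2 k := Nat.one_le_pow _ _ (by omega)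
  calc 2 ^ ((k + 1) ^ Nat.clog 2 k - 1) ≤ 2 ^ (2 * (k ^ Nat.clog 2 (k + 1) - k)) :=
        Nat.pow_le_pow_right two_pos (by omega)
    _ = 4 ^ (k ^ Nat.clog 2 (k + 1) - k) := by rw [pow_mul]; norm_num
    _ ≤ k ^ (k ^ Nat.clog 2 (k + 1) - k) := Nat.pow_le_pow_left hk _
    _ ≤ stirling2 (k ^ Nat.clog 2 (k + 1)) k := pow_sub_le_stirling2 (by omega)

namespace ConvexitySpace

variable {X : Type*}

section Hull

variable (CS : ConvexitySpace X)

theorem subset_hull (Y : Set X) : Y ⊆ CS.hull Y :=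
  fun _ hy _ hS => hS.2 hy

theorem hull_min {Y A : Set X} (hA : A ∈ CS.sets) (hYA : Y ⊆ A) : CS.hull Y ⊆ A :=
  Set.sInter_subset_of_mem ⟨hA, hYA⟩

theorem hull_mono {Y Z : Set X} (h : Y ⊆ Z) : CS.hull Y ⊆ CS.hull Z :=
  fun _ hx S hS => hx S ⟨hS.1, h.trans hS.2⟩

theorem hull_empty : CS.hull ∅ = ∅ :=
  Set.subset_empty_iff.1 (CS.hull_min CS.empty_mem le_rfl)

theorem sInter_mem {G : Finset (Set X)} (hG : ∀ S ∈ G, S ∈ CS.sets) :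
    ⋂₀ (G : Set (Set X)) ∈ CS.sets := by
  induction G using Finset.induction_on with
  | empty => simpa using CS.univ_mem
  | insert S G _ ih =>
    rw [Finset.coe_insert, Set.sInter_insert]
    exact CS.inter_mem _ (hG S (G.mem_insert_self S)) _
      (ih fun T hT => hG T (Finset.mem_insert_of_mem hT))

theorem hull_mem (Y : Set X) : CS.hull Y ∈ CS.sets := by
  have : CS.hull Y = ⋂₀ ↑(CS.sets.filter (Y ⊆ ·)) := by simp [hull]
  rw [this]
  exact CS.sInter_mem fun S hS => (Finset.mem_filter.1 hS).1

end Hull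

variable {CS : ConvexitySpace X}

theorem RadonLE.exists_partition {r : ℕ} (hCS : CS.RadonLE r) {ι : Type*} [Fintype ι]
    (z : ι → X) (hr : r ≤ Fintype.card ι) :
    ∃ I : Set ι, (CS.hull (z '' I) ∩ CS.hull (z '' Iᶜ)).Nonempty := by
  by_cases hz : Function.Injective z
  · obtain ⟨P₁, P₂, hP, hdisj, w, hw₁, hw₂⟩ := hCS (Finset.univ.image z)
      (by rwa [Finset.card_image_of_injective _ hz, Finset.card_univ])
    have hrange : ∀ p ∈ P₁ ∪ P₂, p ∈ Set.range z := by
      intro p hp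
      rw [hP] at hp
      simpa using hp
    refine ⟨z ⁻¹' P₁, w, CS.hull_mono ?_ hw₁, CS.hull_mono ?_ hw₂⟩
    · rw [Set.image_preimage_eq_inter_range]
      exact fun p hp => ⟨hp, hrange p (Finset.mem_union_left _ hp)⟩
    · rw [Set.image_compl_preimage]
      exact fun p hp => ⟨hrange p (Finset.mem_union_right _ hp), Finset.disjoint_right.1 hdisj hp⟩
  · obtain ⟨i, j, hij, hne⟩ := Function.not_injective_iff.1 hz
    exact ⟨{i}, z i, CS.subset_hull _ ⟨i, rfl, rfl⟩, CS.subset_hull _ ⟨j, Ne.symm hne, hij.symm⟩⟩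

theorem RadonLE.sInter_nonempty_of_erase {k : ℕ} (hCS : CS.RadonLE (k + 1)) {G : Finset (Set X)}
    (hG : ∀ S ∈ G, S ∈ CS.sets) (hcard : k + 1 ≤ G.card)
    (herase : ∀ S ∈ G, (⋂₀ (G.erase S : Set (Set X))).Nonempty) :
    (⋂₀ (G : Set (Set X))).Nonempty := by
  choose p hp using herase
  obtain ⟨I, w, hw₁, hw₂⟩ := hCS.exists_partition (fun T : G => p T T.2) (by simpa using hcard)
  refine ⟨w, fun S hS => ?_⟩
  have hsub : ∀ J : Set G, ⟨S, hS⟩ ∉ J → CS.hull ((fun T : G => p T T.2) '' J) ⊆ S := by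
    refine fun J hJ => CS.hull_min (hG S hS) ?_
    rintro _ ⟨T, hT, rfl⟩
    refine hp T T.2 S (Finset.mem_erase.2 ⟨fun h => hJ ?_, hS⟩)
    rwa [show (⟨S, hS⟩ : G) = T from Subtype.ext h]
  by_cases hSI : (⟨S, hS⟩ : G) ∈ I
  · exact hsub Iᶜ (fun h => h hSI) hw₂
  · exact hsub I hSI hw₁

theorem RadonLE.helly [Nonempty X] {k : ℕ} (hCS : CS.RadonLE (k + 1)) (G : Finset (Set X))
    (hG : ∀ S ∈ G, S ∈ CS.sets)
    (hK : ∀ K : Fin k → Set X, (∀ l, K l ∈ G) → (⋂ l, K l).Nonempty) :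
    (⋂₀ (G : Set (Set X))).Nonempty := by
  induction G using Finset.strongInduction with
  | H G ih =>
  rcases le_or_gt G.card k with hcard | hcard
  · rcases G.eq_empty_or_nonempty with rfl | ⟨S₀, hS₀⟩
    · simp
    · have : Nonempty G := ⟨⟨S₀, hS₀⟩⟩
      obtain ⟨e⟩ : Nonempty (G ↪ Fin k) :=
        Function.Embedding.nonempty_of_card_le (by simpa using hcard)
      have hrange : Set.range (fun l => ((Function.invFun e l : G) : Set X)) = G := by
        rw [Set.range_comp' Subtype.val, (Function.invFun_surjective e.injective).range_eq,
          Set.image_univ, Subtype.range_coe]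
      simpa [← Set.sInter_range, hrange] using hK _ fun l => (Function.invFun e l).2
  · exact hCS.sInter_nonempty_of_erase hG hcard fun S hS =>
      ih _ (Finset.erase_ssubset hS) (fun T hT => hG T (Finset.mem_of_mem_erase hT))
        fun K hKG => hK K fun l => Finset.mem_of_mem_erase (hKG l)

theorem RadonLE.exists_split {k : ℕ} (hCS : CS.RadonLE (k + 1)) (z₀ : X) (z : Fin k → X) :
    ∃ σ : Finset (Fin k), σ.Nonempty ∧
      (CS.hull (z '' σ) ∩ CS.hull (insert z₀ (z '' (σ : Set (Fin k))ᶜ))).Nonempty := by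
  obtain ⟨I, hI⟩ := hCS.exists_partition (fun o : Option (Fin k) => o.elim z₀ z) (by simp)
  wlog hnone : none ∉ I generalizing I
  · exact this Iᶜ (by rwa [compl_compl, Set.inter_comm]) (by simpa using hnone)
  obtain ⟨w, hw₁, hw₂⟩ := hI
  set σ : Finset (Fin k) := Finset.univ.filter (fun i => some i ∈ I)
  have h₁ : w ∈ CS.hull (z '' σ) := by
    refine CS.hull_mono ?_ hw₁
    rintro _ ⟨_ | i, hi, rfl⟩
    · exact absurd hi hnone
    · exact ⟨i, by simpa [σ] using hi, rfl⟩
  have h₂ : w ∈ CS.hull (insert z₀ (z '' (σ : Set (Fin k))ᶜ)) := by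
    refine CS.hull_mono ?_ hw₂
    rintro _ ⟨_ | i, hi, rfl⟩
    · exact Set.mem_insert _ _
    · exact Set.mem_insert_of_mem _ ⟨i, by simpa [σ] using hi, rfl⟩
  refine ⟨σ, Finset.nonempty_iff_ne_empty.2 fun hσ => ?_, w, h₁, h₂⟩
  simp [hσ, hull_empty] at h₁


/-- An adaptive Tverberg scheme with leaves `A`, histories `H` and selectors `S`. -/
structure IsTverbergScheme (CS : ConvexitySpace X) {H A S : Type*} (sel : H → S → Set A) :
    Prop where
  pairwise_disjoint : ∀ ρ, Pairwise fun i j => Disjoint (sel ρ i) (sel ρ j)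
  exists_mem_hull : ∀ x : A → X, ∃ ρ w, ∀ j, w ∈ CS.hull (x '' sel ρ j)

def HasTverbergScheme (CS : ConvexitySpace X) (N s : ℕ) : Prop :=
  ∃ (H A : Type) (_ : Fintype H) (sel : H → Fin s → Set A),
    Fintype.card H ≤ N ∧ CS.IsTverbergScheme sel

section Scheme

variable {H A S : Type*} {sel : H → S → Set A}

theorem IsTverbergScheme.exists_iInter_nonempty {ι : Type*} [Nonempty S]
    (hsel : CS.IsTverbergScheme sel) (e : H ↪ ι) (K : ι → S → Set X)
    (hK : ∀ i j, K i j ∈ CS.sets) (hcolor : ∀ φ : ι → S, (⋂ i, K i (φ i)).Nonempty) :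
    ∃ i, (⋂ j, K i j).Nonempty := by
  let label (ρ : H) (a : A) : S :=
    if h : ∃ j, a ∈ sel ρ j then h.choose else Classical.arbitrary S
  have label_eq {ρ j a} (ha : a ∈ sel ρ j) : label ρ a = j := by
    have h : ∃ j, a ∈ sel ρ j := ⟨j, ha⟩
    simp only [label, dif_pos h]
    by_contra hne
    exact Set.disjoint_left.1 (hsel.pairwise_disjoint ρ hne) h.choose_spec ha
  -- the leaf `a` gets a point of `K (e ρ) j` whenever `a ∈ sel ρ j`
  choose x hx using fun a => hcolor (Function.extend e (label · a) fun _ => Classical.arbitrary S)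
  obtain ⟨ρ, w, hw⟩ := hsel.exists_mem_hull x
  refine ⟨e ρ, w, Set.mem_iInter.2 fun j => CS.hull_min (hK _ _) ?_ (hw j)⟩
  rintro _ ⟨a, ha, rfl⟩
  simpa [e.injective.extend_apply, label_eq ha] using Set.mem_iInter.1 (hx a) (e ρ)

theorem IsTverbergScheme.comp_embedding {S' : Type*} (hsel : CS.IsTverbergScheme sel)
    (e : S' ↪ S) : CS.IsTverbergScheme fun ρ => sel ρ ∘ e where
  pairwise_disjoint ρ := (hsel.pairwise_disjoint ρ).comp_of_injective e.injective
  exists_mem_hull x :=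
    let ⟨ρ, w, hw⟩ := hsel.exists_mem_hull x
    ⟨ρ, w, fun j => hw (e j)⟩

end Scheme

theorem HasTverbergScheme.mono {N N' s s' : ℕ} (h : CS.HasTverbergScheme N s) (hN : N ≤ N')
    (hs : s' ≤ s) : CS.HasTverbergScheme N' s' :=
  let ⟨H, A, _, _, hcard, hsel⟩ := h
  ⟨H, A, inferInstance, _, hcard.trans hN, hsel.comp_embedding (Fin.castLEEmb hs)⟩

theorem hasTverbergScheme_one : CS.HasTverbergScheme 1 1 :=
  ⟨Unit, Unit, inferInstance, fun _ _ => Set.univ, le_rfl,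
    { pairwise_disjoint := fun _ => Subsingleton.pairwise
      exists_mem_hull := fun x => ⟨(), x (), fun _ => CS.subset_hull _ ⟨(), trivial, rfl⟩⟩ }⟩

/-- The root of a tree whose `k + 1` subtrees are `A₁` and `k` copies of `A₂`. A history records
the Radon split `σ` of the subtrees (`σ` is the side avoiding `A₁`) and the histories of the
subtrees. Selector `inl j` collects selector `j` of the subtrees in `σ`; selector `inr j` collects
selector `j` of `A₁` and selector `f j` of the other subtrees. -/
def radonSel {k : ℕ} {H₁ H₂ A₁ A₂ S₁ S₂ : Type*} (sel₁ : H₁ → S₁ → Set A₁)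
    (sel₂ : H₂ → S₂ → Set A₂) (f : S₁ → S₂) :
    {σ : Finset (Fin k) // σ.Nonempty} × H₁ × (Fin k → H₂) → S₂ ⊕ S₁ → Set (A₁ ⊕ Fin k × A₂)
  | (σ, _, ρ₂), .inl j => {a | a.elim (fun _ => False) fun p => p.1 ∈ σ.1 ∧ p.2 ∈ sel₂ (ρ₂ p.1) j}
  | (σ, ρ₁, ρ₂), .inr j =>
    {a | a.elim (· ∈ sel₁ ρ₁ j) fun p => p.1 ∉ σ.1 ∧ p.2 ∈ sel₂ (ρ₂ p.1) (f j)}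

theorem IsTverbergScheme.radon {k : ℕ} (hCS : CS.RadonLE (k + 1)) {H₁ H₂ A₁ A₂ S₁ S₂ : Type*}
    {sel₁ : H₁ → S₁ → Set A₁} {sel₂ : H₂ → S₂ → Set A₂} {f : S₁ → S₂}
    (h₁ : CS.IsTverbergScheme sel₁) (h₂ : CS.IsTverbergScheme sel₂) (hf : Function.Injective f) :
    CS.IsTverbergScheme (radonSel (k := k) sel₁ sel₂ f) where
  pairwise_disjoint := by
    rintro ⟨σ, ρ₁, ρ₂⟩ (j | j) (j' | j') hjj' <;> refine Set.disjoint_left.2 ?_ <;>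
      rintro (v | ⟨i, v⟩) ha ha' <;>
      simp only [radonSel, Set.mem_ofPred_eq, Sum.elim_inl, Sum.elim_inr] at ha ha'
    · exact Set.disjoint_left.1 (h₂.pairwise_disjoint _ (by simpa using hjj')) ha.2 ha'.2
    · exact ha'.1 ha.1
    · exact ha.1 ha'.1
    · exact Set.disjoint_left.1 (h₁.pairwise_disjoint _ (by simpa using hjj')) ha ha'
    · exact Set.disjoint_left.1 (h₂.pairwise_disjoint _ (hf.ne (by simpa using hjj'))) ha.2 ha'.2
  exists_mem_hull x := by
    obtain ⟨ρ₁, z₀, hz₀⟩ := h₁.exists_mem_hull (x ∘ Sum.inl)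
    choose ρ₂ z hz using fun i => h₂.exists_mem_hull fun v => x (.inr (i, v))
    obtain ⟨σ, hσ, w, hw₁, hw₂⟩ := hCS.exists_split z₀ z
    refine ⟨(⟨σ, hσ⟩, ρ₁, ρ₂), w, ?_⟩
    rintro (j | j)
    · refine CS.hull_min (CS.hull_mem _) ?_ hw₁
      rintro _ ⟨i, hi, rfl⟩
      refine CS.hull_mono ?_ (hz i j)
      rintro _ ⟨v, hv, rfl⟩
      exact ⟨.inr (i, v), ⟨hi, hv⟩, rfl⟩
    · refine CS.hull_min (CS.hull_mem _) ?_ hw₂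
      rintro _ (rfl | ⟨i, hi, rfl⟩)
      · refine CS.hull_mono ?_ (hz₀ j)
        rintro _ ⟨v, hv, rfl⟩
        exact ⟨.inl v, hv, rfl⟩
      · refine CS.hull_mono ?_ (hz i (f j))
        rintro _ ⟨v, hv, rfl⟩
        exact ⟨.inr (i, v), ⟨hi, hv⟩, rfl⟩

theorem HasTverbergScheme.radon {k N₁ N₂ s₁ s₂ : ℕ} (hCS : CS.RadonLE (k + 1))
    (h₁ : CS.HasTverbergScheme N₁ s₁) (h₂ : CS.HasTverbergScheme N₂ s₂) (hs : s₁ ≤ s₂) :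
    CS.HasTverbergScheme ((2 ^ k - 1) * N₁ * N₂ ^ k) (s₂ + s₁) := by
  obtain ⟨H₁, A₁, _, sel₁, hN₁, hsel₁⟩ := h₁
  obtain ⟨H₂, A₂, _, sel₂, hN₂, hsel₂⟩ := h₂
  refine ⟨_, _, inferInstance, _, ?_,
    (hsel₁.radon hCS hsel₂ (Fin.castLE_injective hs)).comp_embedding
      finSumFinEquiv.symm.toEmbedding⟩
  rw [Fintype.card_prod, Fintype.card_prod, Fintype.card_pi, card_finset_nonempty, Fintype.card_fin,
    Finset.prod_const, Finset.card_univ, Fintype.card_fin, ← mul_assoc]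
  gcongr

theorem RadonLE.hasTverbergScheme_two_pow {k : ℕ} (hCS : CS.RadonLE (k + 1)) (t : ℕ) :
    CS.HasTverbergScheme (2 ^ ((k + 1) ^ t - 1)) (2 ^ t) := by
  induction t with
  | zero => simpa using hasTverbergScheme_one
  | succ t ih =>
    refine (ih.radon hCS ih le_rfl).mono ?_ (by rw [pow_succ]; omega)
    obtain ⟨p, hp⟩ : ∃ p, (k + 1) ^ t = p + 1 := Nat.exists_eq_add_one.2 (by positivity)
    have hexp : (k + 1) ^ (t + 1) - 1 = k + p * (k + 1) :=
      Nat.sub_eq_of_eq_add (by rw [pow_succ, hp]; ring)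
    calc (2 ^ k - 1) * 2 ^ ((k + 1) ^ t - 1) * (2 ^ ((k + 1) ^ t - 1)) ^ k
        ≤ 2 ^ k * 2 ^ p * (2 ^ p) ^ k := by
          rw [hp, Nat.add_sub_cancel]
          gcongr
          exact Nat.sub_le _ _
      _ = 2 ^ ((k + 1) ^ (t + 1) - 1) := by rw [hexp]; ring

theorem RadonLE.hasTverbergScheme_stirling2 {k : ℕ} (hCS : CS.RadonLE (k + 1)) (hk : 2 ≤ k) :
    CS.HasTverbergScheme (stirling2 (k ^ Nat.clog 2 (k + 1)) k) k := by
  obtain rfl | rfl | hk4 : k = 2 ∨ k = 3 ∨ 4 ≤ k := by omega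
  · exact (hCS.hasTverbergScheme_two_pow 1).mono (by decide) le_rfl
  · -- the balanced tree of depth 2 has `7 ^ 5 > S(9, 3)` histories; this one has `7 ^ 4`
    have hstep := hasTverbergScheme_one.radon hCS hasTverbergScheme_one le_rfl
    exact (hasTverbergScheme_one.radon hCS hstep (by norm_num)).mono (by decide) le_rfl
  · exact (hCS.hasTverbergScheme_two_pow _).mono (two_pow_le_stirling2 hk4)
      (Nat.le_pow_clog one_lt_two k)

end ConvexitySpace

/-- **Colorful Helly theorem for convexity spaces** (Lemma 4).
Let `r ≥ 3`, `k = r - 1`, `n = k ^ ⌈log₂ r⌉` and `m = S(n, k)` (a Stirling number of the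
second kind). If `F₁, …, F_m` are finite families of convex sets in a convexity space with
Radon number at most `r` such that every colorful selection `S₁ ∈ F₁, …, S_m ∈ F_m` has
`S₁ ∩ ⋯ ∩ S_m ≠ ∅`, then some family `F_i` has nonempty intersection. -/
theorem colorful_helly_convexity_spaces {X : Type*} (hX : Nonempty X)
    (r : ℕ) (hr : 3 ≤ r) (m : ℕ)
    (hm : m = stirling2 ((r - 1) ^ Nat.clog 2 r) (r - 1))
    (CS : ConvexitySpace X) (hCS : CS.RadonLE r)
    (F : Fin m → Finset (Set X)) (hF : ∀ i, ∀ S ∈ F i, S ∈ CS.sets)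
    (hcolor : ∀ S : Fin m → Set X, (∀ i, S i ∈ F i) → (⋂ i, S i).Nonempty) :
    ∃ i, (⋂₀ ((F i : Finset (Set X)) : Set (Set X))).Nonempty := by
  obtain ⟨k, rfl⟩ : ∃ k, r = k + 1 := ⟨r - 1, by omega⟩
  rw [Nat.add_sub_cancel] at hm
  by_contra! hempty
  have hK : ∀ i, ∃ K : Fin k → Set X, (∀ l, K l ∈ F i) ∧ ¬(⋂ l, K l).Nonempty := fun i => by
    by_contra! h
    exact (hCS.helly (F i) (hF i) h).ne_empty (hempty i)
  choose K hKF hK using hK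
  obtain ⟨H, A, _, sel, hcard, hsel⟩ := hCS.hasTverbergScheme_stirling2 (by omega)
  obtain ⟨e⟩ : Nonempty (H ↪ Fin m) :=
    Function.Embedding.nonempty_of_card_le (by simpa [hm] using hcard)
  have : NeZero k := ⟨by omega⟩
  obtain ⟨i, hi⟩ := hsel.exists_iInter_nonempty e K (fun i l => hF i _ (hKF i l))
    fun φ => hcolor _ fun i => hKF i (φ i)
  exact hK i hi
end

section
/- (Colorful Helly theorem of Lovász and Bárány) Let d ≥ 1 and let F₁, …, F_{d+1} be finite nonempty families of convex sets in ℝ^d such that S₁ ∩ S₂ ∩ ⋯ ∩ S_{d+1} ≠ ∅ for every choice of S_i ∈ F_i, i = 1, …, d+1. Then there exists an index i ∈ {1, …, d+1} such that ⋂_{S ∈ F_i} S ≠ ∅. -/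
/-!
Shrinking every set to the convex hull of the witnesses of colorful intersections it contains, we
may assume all sets compact. Among the colorful choices take one whose intersection has the
largest minimal norm `r`, attained at `x`. Helly's theorem, applied to these `d + 1` sets together
with the open ball of radius `r`, lets us drop one color `j` so that the remaining intersection `D`
still misses that ball. Swapping any set `S` of color `j` into the choice gives an intersection
inside `D` which, by maximality of `r`, has a point of norm at most `r`; strict convexity of the
norm on the convex set `D` forces this point to be `x`, hence `x ∈ S`.
-/

open Set Module

section Helly

variable {𝕜 E ι : Type*} [Field 𝕜] [LinearOrder 𝕜] [IsStrictOrderedRing 𝕜]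
  [AddCommGroup E] [Module 𝕜 E] [FiniteDimensional 𝕜 E] [Fintype ι]

theorem Convex.exists_disjoint_iInter_ne_of_disjoint_iInter {B : Set E} {C : ι → Set E}
    (hB : Convex 𝕜 B) (hC : ∀ i, Convex 𝕜 (C i)) (hcard : finrank 𝕜 E < Fintype.card ι)
    (hne : (⋂ i, C i).Nonempty) (hdisj : Disjoint B (⋂ i, C i)) :
    ∃ j, Disjoint B (⋂ (i) (_ : i ≠ j), C i) := by
  classical
  by_contra! h
  simp_rw [not_disjoint_iff_nonempty_inter] at h
  let F : Option ι → Set E := fun o => o.elim B C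
  obtain ⟨x, hx⟩ : (⋂ o ∈ (Finset.univ : Finset (Option ι)), F o).Nonempty := by
    refine Convex.helly_theorem' (𝕜 := 𝕜) (fun o _ => ?_) fun I _ hI => ?_
    · cases o
      exacts [hB, hC _]
    by_cases hnone : none ∈ I
    · obtain ⟨j, hj⟩ : ∃ j, some j ∉ I := by
        by_contra! hsome
        have hI_univ : I = Finset.univ := Finset.eq_univ_of_forall (Option.forall.2 ⟨hnone, hsome⟩)
        rw [hI_univ, Finset.card_univ, Fintype.card_option] at hI
        omega
      refine (h j).mono fun y hy => mem_iInter₂.2 fun o ho => ?_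
      cases o with
      | none => exact hy.1
      | some i => exact mem_iInter₂.1 hy.2 i (by rintro rfl; exact hj ho)
    · refine hne.mono fun y hy => mem_iInter₂.2 fun o ho => ?_
      cases o with
      | none => exact absurd ho hnone
      | some i => exact mem_iInter.1 hy i
  simp only [Finset.mem_univ, iInter_true] at hx
  exact hdisj.ne_of_mem (mem_iInter.1 hx none) (mem_iInter.2 fun i => mem_iInter.1 hx (some i)) rfl

end Helly

section ColorfulHelly

variable {E ι : Type*} [NormedAddCommGroup E] [NormedSpace ℝ E] [StrictConvexSpace ℝ E]

theorem Convex.eq_of_norm_le_of_forall_le_norm {D : Set E} (hD : Convex ℝ D) {r : ℝ}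
    (hr : ∀ z ∈ D, r ≤ ‖z‖) {x y : E} (hx : x ∈ D) (hy : y ∈ D) (hxr : ‖x‖ ≤ r)
    (hyr : ‖y‖ ≤ r) : x = y := by
  by_contra hxy
  have hmid := hD hx hy (by norm_num : (0 : ℝ) ≤ 1 / 2) (by norm_num : (0 : ℝ) ≤ 1 / 2)
    (by norm_num)
  exact (hr _ hmid).not_gt
    (norm_combo_lt_of_ne hxr hyr hxy (by norm_num) (by norm_num) (by norm_num))

variable [Fintype ι] [FiniteDimensional ℝ E]

theorem colorful_helly_of_isCompact (hcard : finrank ℝ E < Fintype.card ι)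
    (F : ι → Finset (Set E)) (hconv : ∀ i, ∀ S ∈ F i, Convex ℝ S)
    (hcpt : ∀ i, ∀ S ∈ F i, IsCompact S)
    (hcolor : ∀ S : ι → Set E, (∀ i, S i ∈ F i) → (⋂ i, S i).Nonempty) :
    ∃ i, (⋂₀ (F i : Set (Set E))).Nonempty := by
  classical
  by_cases hne : ∀ i, (F i).Nonempty
  swap
  · obtain ⟨i, hi⟩ := not_forall.1 hne
    exact ⟨i, by simp [Finset.not_nonempty_iff_eq_empty.1 hi]⟩
  obtain ⟨i₀⟩ : Nonempty ι := Fintype.card_pos_iff.1 (by omega)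
  have hmin : ∀ S ∈ Fintype.piFinset F, ∃ x ∈ ⋂ i, S i, IsMinOn norm (⋂ i, S i) x := by
    intro S hS
    rw [Fintype.mem_piFinset] at hS
    have hcptS : IsCompact (⋂ i, S i) := (hcpt i₀ _ (hS i₀)).of_isClosed_subset
      (isClosed_iInter fun i => (hcpt i _ (hS i)).isClosed) (iInter_subset _ i₀)
    exact hcptS.exists_isMinOn (hcolor S hS) continuous_norm.continuousOn
  choose! p hpS hpmin using hmin
  obtain ⟨S₀, hS₀, hS₀max⟩ := (Fintype.piFinset F).exists_max_image (fun S => ‖p S‖)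
    (Fintype.piFinset_nonempty.2 hne)
  set x := p S₀
  have hdisj : Disjoint (Metric.ball 0 ‖x‖) (⋂ i, S₀ i) :=
    disjoint_left.2 fun z hz hzS₀ =>
      (mem_ball_zero_iff.1 hz).not_ge (isMinOn_iff.1 (hpmin S₀ hS₀) z hzS₀)
  obtain ⟨j, hj⟩ := Convex.exists_disjoint_iInter_ne_of_disjoint_iInter (convex_ball 0 ‖x‖)
    (fun i => hconv i _ (Fintype.mem_piFinset.1 hS₀ i)) hcard ⟨x, hpS S₀ hS₀⟩ hdisj
  set D := ⋂ (i) (_ : i ≠ j), S₀ i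
  have hD : ∀ z ∈ D, ‖x‖ ≤ ‖z‖ := fun z hz =>
    not_lt.1 fun hzx => disjoint_left.1 hj (mem_ball_zero_iff.2 hzx) hz
  have hxD : x ∈ D := mem_iInter₂.2 fun i _ => mem_iInter.1 (hpS S₀ hS₀) i
  refine ⟨j, x, fun S hS => ?_⟩
  set S' := Function.update S₀ j S
  have hS' : S' ∈ Fintype.piFinset F := Fintype.mem_piFinset.2 fun i => by
    rcases eq_or_ne i j with rfl | hij
    · simpa [S'] using hS
    · simpa [S', hij] using Fintype.mem_piFinset.1 hS₀ i
  have hpD : p S' ∈ D := mem_iInter₂.2 fun i hij => by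
    simpa [S', hij] using mem_iInter.1 (hpS S' hS') i
  have hpx : p S' = x := Convex.eq_of_norm_le_of_forall_le_norm
    (convex_iInter₂ fun i _ => hconv i _ (Fintype.mem_piFinset.1 hS₀ i)) hD hpD hxD
    (hS₀max S' hS') le_rfl
  simpa [S', hpx] using mem_iInter.1 (hpS S' hS') j

theorem colorful_helly (hcard : finrank ℝ E < Fintype.card ι)
    (F : ι → Finset (Set E)) (hconv : ∀ i, ∀ S ∈ F i, Convex ℝ S)
    (hcolor : ∀ S : ι → Set E, (∀ i, S i ∈ F i) → (⋂ i, S i).Nonempty) :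
    ∃ i, (⋂₀ (F i : Set (Set E))).Nonempty := by
  classical
  choose! w hw using hcolor
  set W : Finset E := (Fintype.piFinset F).image w
  set hull : Set E → Set E := fun S => convexHull ℝ (S ∩ W)
  have hull_isCompact (S : Set E) : IsCompact (hull S) :=
    ((Finset.finite_toSet W).subset inter_subset_right).isCompact_convexHull ℝ
  have hw_mem_hull (S : ι → Set E) (hS : ∀ i, S i ∈ F i) (i : ι) : w S ∈ hull (S i) :=
    subset_convexHull ℝ _
      ⟨mem_iInter.1 (hw S hS) i, Finset.mem_image_of_mem _ (Fintype.mem_piFinset.2 hS)⟩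
  obtain ⟨i, x, hx⟩ := colorful_helly_of_isCompact hcard (fun i => (F i).image hull)
    (by simp [hull, convex_convexHull]) (by simp [hull_isCompact]) fun S' hS' => by
      simp only [Finset.mem_image] at hS'
      choose S hS hSS' using hS'
      exact ⟨w S, mem_iInter.2 fun i => hSS' i ▸ hw_mem_hull S hS i⟩
  exact ⟨i, x, fun S hS => convexHull_min inter_subset_left (hconv i S hS)
    (hx _ (Finset.mem_image_of_mem hull hS))⟩

end ColorfulHelly

theorem colorful_helly_euclidean_general (d : ℕ)
    (F : Fin (d + 1) → Finset (Set (EuclideanSpace ℝ (Fin d))))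
    (hconv : ∀ i, ∀ S ∈ F i, Convex ℝ S)
    (hcolor : ∀ S : Fin (d + 1) → Set (EuclideanSpace ℝ (Fin d)),
      (∀ i, S i ∈ F i) → (⋂ i, S i).Nonempty) :
    ∃ i, (⋂₀ ((F i : Finset (Set (EuclideanSpace ℝ (Fin d)))) :
      Set (Set (EuclideanSpace ℝ (Fin d))))).Nonempty :=
  colorful_helly (by simp) F hconv hcolor

/-- **Colorful Helly theorem of Lovász and Bárány** ([col-hell]).
Let `F₁, …, F_{d+1}` be finite nonempty families of convex sets in `ℝ^d` such that
`S₁ ∩ ⋯ ∩ S_{d+1} ≠ ∅` for every colorful choice `S_i ∈ F_i`. Then for some `i` the whole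
family `F_i` has nonempty intersection. -/
theorem colorful_helly_euclidean (d : ℕ) (hd : 1 ≤ d)
    (F : Fin (d + 1) → Finset (Set (EuclideanSpace ℝ (Fin d))))
    (hconv : ∀ i, ∀ S ∈ F i, Convex ℝ S)
    (hne : ∀ i, (F i).Nonempty)
    (hcolor : ∀ S : Fin (d + 1) → Set (EuclideanSpace ℝ (Fin d)),
      (∀ i, S i ∈ F i) → (⋂ i, S i).Nonempty) :
    ∃ i, (⋂₀ ((F i : Finset (Set (EuclideanSpace ℝ (Fin d)))) :
      Set (Set (EuclideanSpace ℝ (Fin d))))).Nonempty :=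
  colorful_helly_euclidean_general d F hconv hcolor
end
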